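/- arXiv:0706.3523 — 2 statements merged into one kernel-verified Lean document; each statement's English description precedes it below -/
import Mathlib

section
/- Let T be the set of finite words s over the alphabet 3 = {0,1,2} such that every prefix of s contains at most as many occurrences of the letter 2 as of the letter 1. Define the erasing operation s ↦ s^↩ ∈ 2^{<ω} for s ∈ T by recursion: ∅^↩ := ∅; (tε)^↩ := t^↩ε if ε ∈ {0,1}; and (t2)^↩ := t^↩ with its last occurrence of the letter 1 replaced by 0. Then for all finite words s, t ∈ T, one has (st)^↩ = s^↩ t^↩. -/
open Set

/-- The prefix of length `l` of an infinite word. -/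
def wordPrefix {α : Type*} (x : ℕ → α) (l : ℕ) : List α := List.ofFn fun i : Fin l => x i.val

/-- `T ∩ 3^{<ω}`: finite words over `3 = {0,1,2}` all of whose prefixes contain at most as
many `2`s as `1`s. -/
def Tfin : Set (List (Fin 3)) :=
  { s | ∀ l : ℕ, (s.take l).count 2 ≤ (s.take l).count 1 }

/-- `T ∩ 3^ω`: infinite words over `3 = {0,1,2}` all of whose finite prefixes contain at
most as many `2`s as `1`s. -/
def Tinf : Set (ℕ → Fin 3) :=
  { α | ∀ l : ℕ, (wordPrefix α l).count 2 ≤ (wordPrefix α l).count 1 }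

/-- Replace the first occurrence of `1` (i.e. `true`) in a binary word by `0`. -/
def replaceFirstOne : List Bool → List Bool
  | [] => []
  | true :: t => false :: t
  | false :: t => false :: replaceFirstOne t

/-- Replace the last occurrence of `1` (i.e. `true`) in a binary word by `0`. -/
def replaceLastOne (l : List Bool) : List Bool := (replaceFirstOne l.reverse).reverse

/-- One step of the erasing operation: appending a letter `ε ∈ {0,1}` appends it to the
erased word, while appending the letter `2` replaces the last `1` of the erased word by `0`. -/
def eraseStep (acc : List Bool) (a : Fin 3) : List Bool :=
  if a = 2 then replaceLastOne acc else acc ++ [decide (a = 1)]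

/-- The erasing operation `s ↦ s^↩` on finite words over `3 = {0,1,2}` (letters `0`,`1` of
the binary output are encoded as `false`,`true`): `∅^↩ = ∅`, `(tε)^↩ = t^↩ε` for `ε ∈ {0,1}`,
and `(t2)^↩ = t^↩` with its last `1` replaced by `0`. -/
def eraseWord (s : List (Fin 3)) : List Bool := s.foldl eraseStep []

lemma repFirst_append (l m : List Bool) (h : true ∈ l) :
    replaceFirstOne (l ++ m) = replaceFirstOne l ++ m := by
  induction l with
  | nil => simp at h
  | cons a t ih =>
    cases a with
    | true => simp [replaceFirstOne]
    | false =>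
      simp only [List.mem_cons] at h
      simp [replaceFirstOne, ih (by tauto)]

lemma repLast_append (m l : List Bool) (h : true ∈ l) :
    replaceLastOne (m ++ l) = m ++ replaceLastOne l := by
  unfold replaceLastOne
  rw [List.reverse_append, repFirst_append _ _ (by simpa using h), List.reverse_append,
    List.reverse_reverse]

lemma count_repFirst (l : List Bool) :
    (replaceFirstOne l).count true + 1 = l.count true + (if true ∈ l then 0 else 1) := by
  induction l with
  | nil => simp [replaceFirstOne]
  | cons a t ih =>
    cases a with
    | true => simp [replaceFirstOne, List.count_cons]
    | false =>
      simp only [replaceFirstOne, List.count_cons, List.mem_cons]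
      simpa using ih

lemma count_repLast (l : List Bool) (h : true ∈ l) :
    (replaceLastOne l).count true + 1 = l.count true := by
  have := count_repFirst l.reverse
  rw [if_pos (by simpa using h)] at this
  simpa [replaceLastOne] using this

lemma Tfin_of_append {s t : List (Fin 3)} (h : s ++ t ∈ Tfin) : s ∈ Tfin := by
  intro l
  rcases le_or_gt l s.length with hl | hl
  · have := h l
    rwa [List.take_append_of_le_length hl] at this
  · have := h s.length
    rw [List.take_append_of_le_length le_rfl, List.take_length] at this
    rwa [List.take_of_length_le (by omega)]

lemma eraseWord_snoc (s : List (Fin 3)) (a : Fin 3) :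
    eraseWord (s ++ [a]) = eraseStep (eraseWord s) a := by
  simp [eraseWord, List.foldl_append]

lemma count_two_lt {s : List (Fin 3)} (hs : s ++ [2] ∈ Tfin) :
    s.count 2 + 1 ≤ s.count 1 := by
  have h2 := hs (s.length + 1)
  rw [List.take_of_length_le (by simp)] at h2
  simp only [List.count_append, show List.count (1:Fin 3) [2] = 0 from by decide,
    show List.count (2:Fin 3) [2] = 1 from by decide] at h2
  omega

lemma count_eraseWord (s : List (Fin 3)) (hs : s ∈ Tfin) :
    (eraseWord s).count true + s.count 2 = s.count 1 := by
  induction s using List.reverseRecOn with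
  | nil => simp [eraseWord]
  | append_singleton s a ih =>
    have hs' : s ∈ Tfin := Tfin_of_append hs
    have key := ih hs'
    rw [eraseWord_snoc]
    by_cases ha2 : a = 2
    · subst ha2
      simp only [eraseStep, if_pos rfl, if_true]
      have h2 := count_two_lt hs
      simp only [List.count_append, show List.count (1:Fin 3) [2] = 0 from by decide,
        show List.count (2:Fin 3) [2] = 1 from by decide]
      have hm : (0:ℕ) < (eraseWord s).count true := by omega
      have := count_repLast (eraseWord s) (List.count_pos_iff.mp hm)
      omega
    · by_cases ha1 : a = 1
      · subst ha1
        simp only [eraseStep, show ((1:Fin 3) = 2) = False from by simp, if_false,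
          List.count_append, show List.count (1:Fin 3) [1] = 1 from by decide,
          show List.count (2:Fin 3) [1] = 0 from by decide,
          show (decide ((1:Fin 3) = 1)) = true from by decide,
          show List.count true [true] = 1 from by decide]
        simp only [show (decide True) = true from by decide,
          show List.count true [true] = 1 from by decide]
        omega
      · simp only [eraseStep, ha2, if_false, List.count_append,
          List.count_eq_zero.mpr (show (1:Fin 3) ∉ [a] by simp [Ne.symm ha1]),
          List.count_eq_zero.mpr (show (2:Fin 3) ∉ [a] by simp [Ne.symm ha2])]
        have h0 : List.count true [decide (a = 1)] = 0 := by simp [ha1]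
        omega

/-- For all finite words `s, t ∈ T`, `(st)^↩ = s^↩ t^↩`. -/
theorem eraseWord_append (s t : List (Fin 3)) (hs : s ∈ Tfin) (ht : t ∈ Tfin) :
    eraseWord (s ++ t) = eraseWord s ++ eraseWord t := by
  induction t using List.reverseRecOn with
  | nil => simp [eraseWord]
  | append_singleton t a ih =>
    have ht' : t ∈ Tfin := Tfin_of_append ht
    rw [← List.append_assoc, eraseWord_snoc, eraseWord_snoc, ih ht']
    by_cases ha : a = 2
    · subst ha
      simp only [eraseStep, if_pos rfl, if_true]
      have h2 := count_two_lt ht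
      have key := count_eraseWord t ht'
      have hm : (0:ℕ) < (eraseWord t).count true := by omega
      exact repLast_append _ _ (List.count_pos_iff.mp hm)
    · simp [eraseStep, ha]
end

section
/- Let T be the set of finite or infinite words over the alphabet 3 = {0,1,2} such that every finite prefix contains at most as many occurrences of the letter 2 as of the letter 1, and let s ↦ s^↩ be the erasing operation on finite words of T (∅^↩ := ∅; (tε)^↩ := t^↩ε for ε ∈ {0,1}; (t2)^↩ := t^↩ with its last 1 replaced by 0). For infinite α ∈ T define α^↩ := lim_n (α↾n)^↩, where for finite binary t and a sequence (s_n) of finite binary words, t ≺ lim_n s_n iff t is a prefix of s_n for all sufficiently large n. Then for every finite s ∈ T and every infinite β ∈ T one has (sβ)^↩ = s^↩ β^↩ (concatenation of the finite word s^↩ with the infinite word β^↩). -/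
open Set Classical

/-- `t` is a (finite) prefix of the infinite word `x`. -/
def InfPrefix {α : Type*} (t : List α) (x : ℕ → α) : Prop :=
  ∀ i : Fin t.length, t.get i = x i.val

/-- The infinite word `x` is the limit of the sequence of finite words `s`: a finite word
is a prefix of `x` iff it is a prefix of `s m` for all sufficiently large `m`. -/
def IsLimitOf (x : ℕ → Bool) (s : ℕ → List Bool) : Prop :=
  ∀ t : List Bool, InfPrefix t x ↔ ∀ᶠ m in Filter.atTop, t <+: s m

/-- The erasure `e(α) := lim_n (α↾n)^↩` of an infinite word over `3 = {0,1,2}` (an arbitrary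
value is returned if the limit does not exist; for `α ∈ T ∩ 3^ω` it always exists). -/
noncomputable def eMap (α : ℕ → Fin 3) : ℕ → Bool :=
  if h : ∃ x : ℕ → Bool, IsLimitOf x (fun m => eraseWord (wordPrefix α m)) then h.choose
  else fun _ => false

/-- Concatenation of a finite word with an infinite word. -/
def catInf {α : Type*} (s : List α) (x : ℕ → α) : ℕ → α := fun n =>
  if h : n < s.length then s.get ⟨n, h⟩ else x (n - s.length)

/-!
Read at position `n`, the erased prefixes `(γ↾m)^↩` of a word `γ ∈ T` only ever change from
"absent" to `1` or `0`, or from `1` to `0`: appending a letter `0`/`1` writes a new position and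
appending `2` turns a `1` into `0`. Since `2`s never outnumber `1`s, at most half the letters of
`γ↾m` are `2`s, so position `n` is written once `m > 2n`; hence every position stabilises and the
limit `γ^↩` exists. The counting condition also guarantees that when a `2` of `β` is read there
is a `1` in `(β↾m)^↩` to erase, so that the `2` never reaches back into the erasure of `s`:
`(s (β↾m))^↩ = s^↩ (β↾m)^↩`, and the theorem follows by passing to the limit.
-/

open Filter List

section InfiniteWords

variable {α : Type*}

@[simp]
lemma length_wordPrefix (x : ℕ → α) (l : ℕ) : (wordPrefix x l).length = l := by
  simp [wordPrefix]

@[simp]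
lemma getElem_wordPrefix (x : ℕ → α) (l i : ℕ) (h : i < (wordPrefix x l).length) :
    (wordPrefix x l)[i] = x i := by
  simp [wordPrefix]

lemma wordPrefix_add (x : ℕ → α) (l k : ℕ) :
    wordPrefix x (l + k) = wordPrefix x l ++ wordPrefix (fun i => x (l + i)) k := by
  simp [wordPrefix, ofFn_add]

lemma wordPrefix_succ (x : ℕ → α) (l : ℕ) : wordPrefix x (l + 1) = wordPrefix x l ++ [x l] := by
  rw [wordPrefix_add]
  simp [wordPrefix]

lemma wordPrefix_prefix_wordPrefix (x : ℕ → α) {l l' : ℕ} (h : l ≤ l') :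
    wordPrefix x l <+: wordPrefix x l' := by
  obtain ⟨k, rfl⟩ := Nat.exists_eq_add_of_le h
  rw [wordPrefix_add]
  exact prefix_append _ _

lemma take_wordPrefix (x : ℕ → α) (k l : ℕ) : (wordPrefix x l).take k = wordPrefix x (min k l) :=
  ext_getElem (by simp) (by simp)

lemma wordPrefix_catInf (w : List α) (x : ℕ → α) (n : ℕ) :
    wordPrefix (catInf w x) (w.length + n) = w ++ wordPrefix x n := by
  rw [wordPrefix_add]
  congr 1
  · exact ext_getElem (by simp) fun i hi _ => by simp_all [catInf]
  · simp [wordPrefix, catInf]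

lemma infPrefix_iff_wordPrefix_eq {t : List α} {x : ℕ → α} :
    InfPrefix t x ↔ wordPrefix x t.length = t := by
  simp [InfPrefix, ext_getElem_iff, eq_comm, Fin.forall_iff]

lemma infPrefix_wordPrefix (x : ℕ → α) (l : ℕ) : InfPrefix (wordPrefix x l) x :=
  infPrefix_iff_wordPrefix_eq.2 (by simp)

end InfiniteWords

section Limits

variable {x y : ℕ → Bool} {s : ℕ → List Bool}

lemma isLimitOf_iff : IsLimitOf x s ↔ ∀ n, ∀ᶠ m in atTop, wordPrefix x n <+: s m := by
  refine ⟨fun h n => (h _).1 (infPrefix_wordPrefix x n), fun h t => ⟨fun ht => ?_, fun ht => ?_⟩⟩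
  · rw [← infPrefix_iff_wordPrefix_eq.1 ht]
    exact h _
  · obtain ⟨m, hx, ht⟩ := ((h t.length).and ht).exists
    exact infPrefix_iff_wordPrefix_eq.2 ((prefix_of_prefix_length_le hx ht (by simp)).eq_of_length
      (by simp))

lemma IsLimitOf.unique (hx : IsLimitOf x s) (hy : IsLimitOf y s) : x = y := by
  funext n
  have h := (hy _).2 ((hx _).1 (infPrefix_wordPrefix x (n + 1)))
  simpa using h ⟨n, by simp⟩

lemma isLimitOf_of_eventually_getElem? (h : ∀ n, ∀ᶠ m in atTop, (s m)[n]? = some (x n)) :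
    IsLimitOf x s := by
  refine isLimitOf_iff.2 fun n => ?_
  filter_upwards [(eventually_all_finite (Set.finite_Iio n)).2 fun i _ => h i] with m hm
  exact prefix_iff_getElem?.2 fun i hi => by simpa using hm i (by simpa using hi)

lemma IsLimitOf.append_left (w : List Bool) (h : IsLimitOf x s) :
    IsLimitOf (catInf w x) fun m => w ++ s m := by
  refine isLimitOf_iff.2 fun n => ?_
  filter_upwards [isLimitOf_iff.1 h n] with m hm
  refine (wordPrefix_prefix_wordPrefix _ (Nat.le_add_left n w.length)).trans ?_
  rw [wordPrefix_catInf]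
  exact (prefix_append_right_inj w).2 hm

lemma IsLimitOf.of_comp_add (c : ℕ) (h : IsLimitOf x fun m => s (m + c)) : IsLimitOf x s :=
  fun t => (h t).trans <| by
    conv_rhs => rw [← map_add_atTop_eq_nat c]
    rfl

end Limits

section Erasure

lemma eraseWord_append_s12 (u v : List (Fin 3)) :
    eraseWord (u ++ v) = v.foldl eraseStep (eraseWord u) :=
  foldl_append ..

lemma eraseWord_concat (u : List (Fin 3)) (a : Fin 3) :
    eraseWord (u ++ [a]) = eraseStep (eraseWord u) a := by
  simp [eraseWord_append_s12]

lemma mem_Tfin_of_prefix {t s : List (Fin 3)} (h : t <+: s) (hs : s ∈ Tfin) : t ∈ Tfin := by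
  intro l
  rw [prefix_iff_eq_take.1 h, take_take]
  exact hs _

lemma count_two_le_count_one_of_mem_Tfin {s : List (Fin 3)} (hs : s ∈ Tfin) :
    s.count 2 ≤ s.count 1 := by
  simpa using hs s.length

lemma count_two_lt_count_one_of_append_two_mem_Tfin {v : List (Fin 3)} (h : v ++ [2] ∈ Tfin) :
    v.count 2 < v.count 1 := by
  have h12 : [(2 : Fin 3)].count 1 = 0 := by decide
  have hcount := count_two_le_count_one_of_mem_Tfin h
  simp only [count_append, count_singleton_self, h12] at hcount
  omega

lemma wordPrefix_mem_Tfin {γ : ℕ → Fin 3} (hγ : γ ∈ Tinf) (l : ℕ) : wordPrefix γ l ∈ Tfin := by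
  intro k
  rw [take_wordPrefix]
  exact hγ _

lemma replaceFirstOne_append {l : List Bool} (r : List Bool) (h : true ∈ l) :
    replaceFirstOne (l ++ r) = replaceFirstOne l ++ r := by
  induction l with
  | nil => simp at h
  | cons a t ih => cases a <;> simp_all [replaceFirstOne]

lemma replaceLastOne_append (acc : List Bool) {w : List Bool} (h : true ∈ w) :
    replaceLastOne (acc ++ w) = acc ++ replaceLastOne w := by
  simp [replaceLastOne, replaceFirstOne_append _ (mem_reverse.2 h)]

lemma count_replaceFirstOne {l : List Bool} (h : true ∈ l) :
    (replaceFirstOne l).count true + 1 = l.count true := by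
  induction l with
  | nil => simp at h
  | cons a t ih => cases a <;> simp_all [replaceFirstOne]

lemma count_replaceLastOne {l : List Bool} (h : true ∈ l) :
    (replaceLastOne l).count true + 1 = l.count true := by
  simpa [replaceLastOne] using count_replaceFirstOne (mem_reverse.2 h)

lemma count_true_eraseWord {u : List (Fin 3)} (hu : u ∈ Tfin) :
    (eraseWord u).count true + u.count 2 = u.count 1 := by
  induction u using reverseRecOn with
  | nil => rfl
  | append_singleton v a ih =>
    have hv := ih (mem_Tfin_of_prefix (prefix_append v [a]) hu)
    rw [eraseWord_concat]
    fin_cases a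
    · simp [eraseStep, count_append]
      omega
    · simp [eraseStep, count_append]
      omega
    · have hmem : true ∈ eraseWord v :=
        count_pos_iff.1 (by have := count_two_lt_count_one_of_append_two_mem_Tfin hu; omega)
      have := count_replaceLastOne hmem
      simp [eraseStep, count_append]
      omega

lemma true_mem_eraseWord {v : List (Fin 3)} (h : v ++ [2] ∈ Tfin) : true ∈ eraseWord v := by
  have hv := count_true_eraseWord (mem_Tfin_of_prefix (prefix_append v [2]) h)
  exact count_pos_iff.1 (by have := count_two_lt_count_one_of_append_two_mem_Tfin h; omega)

lemma foldl_eraseStep_of_mem_Tfin {u : List (Fin 3)} (hu : u ∈ Tfin) (acc : List Bool) :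
    u.foldl eraseStep acc = acc ++ eraseWord u := by
  induction u using reverseRecOn with
  | nil => simp [eraseWord]
  | append_singleton v a ih =>
    rw [foldl_append, ih (mem_Tfin_of_prefix (prefix_append v [a]) hu), eraseWord_concat]
    by_cases ha : a = 2
    · subst ha
      simp [eraseStep, replaceLastOne_append acc (true_mem_eraseWord hu)]
    · simp [eraseStep, ha]

lemma eraseWord_append_of_mem_Tfin (u : List (Fin 3)) {v : List (Fin 3)} (hv : v ∈ Tfin) :
    eraseWord (u ++ v) = eraseWord u ++ eraseWord v := by
  rw [eraseWord_append_s12, foldl_eraseStep_of_mem_Tfin hv]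

end Erasure

section Stabilisation

lemma forall₂_replaceFirstOne (l : List Bool) : Forall₂ (· ≤ ·) (replaceFirstOne l) l := by
  induction l with
  | nil => exact .nil
  | cons a t ih =>
    cases a
    · exact .cons le_rfl ih
    · exact .cons (Bool.false_le _) (forall₂_refl t)

lemma forall₂_replaceLastOne (l : List Bool) : Forall₂ (· ≤ ·) (replaceLastOne l) l := by
  rw [replaceLastOne, ← forall₂_reverse_iff, reverse_reverse]
  exact forall₂_replaceFirstOne _

lemma length_eraseWord_add_count_two (u : List (Fin 3)) :
    (eraseWord u).length + u.count 2 = u.length := by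
  induction u using reverseRecOn with
  | nil => rfl
  | append_singleton v a ih =>
    rw [eraseWord_concat]
    fin_cases a <;>
      simp [eraseStep, (forall₂_replaceLastOne _).length_eq, count_append] <;> omega

lemma count_add_count_le_length {β : Type*} [DecidableEq β] {a b : β} (hab : a ≠ b)
    (l : List β) : l.count a + l.count b ≤ l.length := by
  induction l with
  | nil => simp
  | cons c t ih =>
    simp only [count_cons, length_cons, beq_iff_eq]
    split_ifs <;> simp_all <;> omega

lemma lt_length_eraseWord_wordPrefix {γ : ℕ → Fin 3} (hγ : γ ∈ Tinf) {n m : ℕ} (hm : 2 * n < m) :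
    n < (eraseWord (wordPrefix γ m)).length := by
  have hlen := length_eraseWord_add_count_two (wordPrefix γ m)
  have hsum := count_add_count_le_length (by decide : (1 : Fin 3) ≠ 2) (wordPrefix γ m)
  have hT := hγ m
  simp only [length_wordPrefix] at hlen hsum
  omega

/-- The letter of `l` at position `n`, where `⊤` stands for a position not yet written. -/
def letterAt (l : List Bool) (n : ℕ) : WithTop Bool := l[n]?

lemma letterAt_le_of_forall₂ {l₁ l₂ : List Bool} (h : Forall₂ (· ≤ ·) l₁ l₂) (n : ℕ) :
    letterAt l₁ n ≤ letterAt l₂ n := by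
  induction h generalizing n with
  | nil => exact le_rfl
  | @cons a b _ _ hab _ ih =>
    cases n
    · exact WithTop.coe_le_coe.2 hab
    · exact ih _

lemma letterAt_eraseStep_le (acc : List Bool) (a : Fin 3) (n : ℕ) :
    letterAt (eraseStep acc a) n ≤ letterAt acc n := by
  unfold eraseStep
  split_ifs
  · exact letterAt_le_of_forall₂ (forall₂_replaceLastOne acc) n
  · rcases lt_or_ge n acc.length with h | h
    · rw [letterAt, letterAt, getElem?_append_left h]
      exact le_rfl
    · have h_top : letterAt acc n = ⊤ := getElem?_eq_none h
      rw [h_top]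
      exact le_top

lemma antitone_letterAt_eraseWord_wordPrefix (γ : ℕ → Fin 3) (n : ℕ) :
    Antitone fun m => letterAt (eraseWord (wordPrefix γ m)) n :=
  antitone_nat_of_succ_le fun m => by
    simpa only [wordPrefix_succ, eraseWord_concat] using letterAt_eraseStep_le _ (γ m) n

lemma exists_isLimitOf_eraseWord_wordPrefix {γ : ℕ → Fin 3} (hγ : γ ∈ Tinf) :
    ∃ x, IsLimitOf x fun m => eraseWord (wordPrefix γ m) := by
  have stable : ∀ n : ℕ, ∃ b, ∀ᶠ m in atTop, (eraseWord (wordPrefix γ m))[n]? = some b := by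
    intro n
    obtain ⟨N, hN⟩ :=
      WellFoundedLT.antitone_chain_condition (antitone_letterAt_eraseWord_wordPrefix γ n)
    let M := max N (2 * n + 1)
    have hM : n < (eraseWord (wordPrefix γ M)).length :=
      lt_length_eraseWord_wordPrefix hγ (by omega)
    refine ⟨(eraseWord (wordPrefix γ M))[n]'hM, eventually_atTop.2 ⟨N, fun m hm => ?_⟩⟩
    have h : letterAt (eraseWord (wordPrefix γ m)) n = letterAt (eraseWord (wordPrefix γ M)) n :=
      (hN m hm).symm.trans (hN M (le_max_left _ _))
    rw [letterAt, letterAt, getElem?_eq_getElem hM] at h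
    exact h
  choose x hx using stable
  exact ⟨x, isLimitOf_of_eventually_getElem? hx⟩

end Stabilisation

lemma eMap_eq_of_isLimitOf {α : ℕ → Fin 3} {x : ℕ → Bool}
    (h : IsLimitOf x fun m => eraseWord (wordPrefix α m)) : eMap α = x := by
  have hex : ∃ y, IsLimitOf y fun m => eraseWord (wordPrefix α m) := ⟨x, h⟩
  rw [eMap, dif_pos hex]
  exact hex.choose_spec.unique h

theorem eMap_cat_general (s : List (Fin 3)) (β : ℕ → Fin 3) (hβ : β ∈ Tinf) :
    eMap (catInf s β) = catInf (eraseWord s) (eMap β) := by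
  obtain ⟨x, hx⟩ := exists_isLimitOf_eraseWord_wordPrefix hβ
  have hsβ : IsLimitOf (catInf (eraseWord s) x) fun m => eraseWord (wordPrefix (catInf s β) m) := by
    refine IsLimitOf.of_comp_add s.length ?_
    simpa only [add_comm _ s.length, wordPrefix_catInf,
      eraseWord_append_of_mem_Tfin _ (wordPrefix_mem_Tfin hβ _)] using hx.append_left (eraseWord s)
  rw [eMap_eq_of_isLimitOf hx, eMap_eq_of_isLimitOf hsβ]

/-- For every finite word `s ∈ T` and infinite word `β ∈ T`, `(sβ)^↩ = s^↩ β^↩`. -/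
theorem eMap_cat (s : List (Fin 3)) (hs : s ∈ Tfin) (β : ℕ → Fin 3) (hβ : β ∈ Tinf) :
    eMap (catInf s β) = catInf (eraseWord s) (eMap β) :=
  eMap_cat_general s β hβ
end
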